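/- Let m, n > 1 and k ≤ max(m,n). Then every state in V_k has length exactly k, and every state in V_k has a unique representation as a convex combination of pure product states. -/

import Mathlib

open scoped Kronecker ComplexOrder

noncomputable section

/-- The vector state (rank-one projection onto `ℂx`) associated to a unit vector `x`. -/
def vecState {ι : Type*} [Fintype ι] (x : EuclideanSpace ℂ ι) : Matrix ι ι ℂ :=
  Matrix.of fun i j => x i * (starRingEnd ℂ) (x j)

/-- The (Kronecker) tensor product of two vectors. -/
def tensorVec {m n : ℕ} (x : EuclideanSpace ℂ (Fin m)) (y : EuclideanSpace ℂ (Fin n)) :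
    EuclideanSpace ℂ (Fin m × Fin n) :=
  WithLp.toLp 2 (fun p : Fin m × Fin n => x p.1 * y p.2)

/-- The state space of `B(ℂ^ι)`: density matrices. -/
def stateSet (ι : Type*) [Fintype ι] [DecidableEq ι] : Set (Matrix ι ι ℂ) :=
  {ρ | ρ.PosSemidef ∧ ρ.trace = 1}

/-- The set of separable states on `B(ℂᵐ ⊗ ℂⁿ)`: convex combinations of pure product states. -/
def sepSet (m n : ℕ) : Set (Matrix (Fin m × Fin n) (Fin m × Fin n) ℂ) :=
  {ρ | ∃ (r : ℕ) (lam : Fin r → ℝ) (x : Fin r → EuclideanSpace ℂ (Fin m))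
        (y : Fin r → EuclideanSpace ℂ (Fin n)),
      (∀ i, 0 ≤ lam i) ∧ (∑ i, lam i) = 1 ∧ (∀ i, ‖x i‖ = 1) ∧ (∀ i, ‖y i‖ = 1) ∧
      ρ = ∑ i, lam i • vecState (tensorVec (x i) (y i))}

/-- `F` is a face of the convex set `C`. -/
def IsFace {E : Type*} [AddCommGroup E] [Module ℝ E] (C F : Set E) : Prop :=
  F ⊆ C ∧ Convex ℝ F ∧
    ∀ ⦃x⦄, x ∈ C → ∀ ⦃y⦄, y ∈ C → ∀ ⦃z⦄, z ∈ openSegment ℝ x y → z ∈ F → x ∈ F ∧ y ∈ F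

/-- The smallest face of `C` containing `X`. -/
def faceGen {E : Type*} [AddCommGroup E] [Module ℝ E] (C X : Set E) : Set E :=
  ⋂₀ {F | IsFace C F ∧ X ⊆ F}

/-- `C` is the direct convex sum of the convex sets `F 1, …, F q`. -/
def IsDirectConvexSum {E : Type*} [AddCommGroup E] [Module ℝ E] {q : ℕ}
    (C : Set E) (F : Fin q → Set E) : Prop :=
  (∀ x ∈ C, ∃ (lam : Fin q → ℝ) (pt : Fin q → E),
      (∀ i, 0 ≤ lam i) ∧ (∑ i, lam i) = 1 ∧ (∀ i, lam i ≠ 0 → pt i ∈ F i) ∧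
      x = ∑ i, lam i • pt i) ∧
  (∀ (lam lam' : Fin q → ℝ) (pt pt' : Fin q → E),
      (∀ i, 0 ≤ lam i) → (∑ i, lam i) = 1 → (∀ i, lam i ≠ 0 → pt i ∈ F i) →
      (∀ i, 0 ≤ lam' i) → (∑ i, lam' i) = 1 → (∀ i, lam' i ≠ 0 → pt' i ∈ F i) →
      (∑ i, lam i • pt i) = (∑ i, lam' i • pt' i) →
      ∀ i, lam i = lam' i ∧ (lam i ≠ 0 → pt i = pt' i))

/-- A (finite-dimensional) convex set is a simplex: every point has a unique
representation as a convex combination of its extreme points. -/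
def IsSimplex {E : Type*} [AddCommGroup E] [Module ℝ E] (C : Set E) : Prop :=
  ∀ x ∈ C, ∃! w : E →₀ ℝ,
    ↑w.support ⊆ Set.extremePoints ℝ C ∧ (∀ y, 0 ≤ w y) ∧
    (w.sum fun _ a => a) = 1 ∧ (w.sum fun y a => a • y) = x

/-- Two convex sets (possibly in different ambient spaces) are affinely isomorphic. -/
def AffIsomorphic {E F' : Type*} [AddCommGroup E] [Module ℝ E] [AddCommGroup F'] [Module ℝ F']
    (A : Set E) (B : Set F') : Prop :=
  ∃ φ : E → F', Set.BijOn φ A B ∧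
    ∀ x ∈ A, ∀ y ∈ A, ∀ t : ℝ, 0 ≤ t → t ≤ 1 →
      φ (t • x + (1 - t) • y) = t • φ x + (1 - t) • φ y

/-- `ω` admits a decomposition as a convex combination of `r` pure product states. -/
def HasDecompOfSize (m n r : ℕ) (ω : Matrix (Fin m × Fin n) (Fin m × Fin n) ℂ) : Prop :=
  ∃ (lam : Fin r → ℝ) (x : Fin r → EuclideanSpace ℂ (Fin m))
    (y : Fin r → EuclideanSpace ℂ (Fin n)),
    (∀ i, 0 ≤ lam i) ∧ (∑ i, lam i) = 1 ∧ (∀ i, ‖x i‖ = 1) ∧ (∀ i, ‖y i‖ = 1) ∧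
    ω = ∑ i, lam i • vecState (tensorVec (x i) (y i))

/-- The separable state `ω` has length (optimal ensemble cardinality) exactly `k`. -/
def HasLength (m n k : ℕ) (ω : Matrix (Fin m × Fin n) (Fin m × Fin n) ℂ) : Prop :=
  HasDecompOfSize m n k ω ∧ ∀ r < k, ¬ HasDecompOfSize m n r ω

/-- `S_k`: the set of separable states of length at most `k`. -/
def lengthLeSet (m n k : ℕ) : Set (Matrix (Fin m × Fin n) (Fin m × Fin n) ℂ) :=
  {ω | ∃ r ≤ k, HasDecompOfSize m n r ω}

/-- `V_k`: the states `ω = Σᵢ λᵢ ω_{eᵢ⊗fᵢ}` with all `λᵢ > 0`, the lines `ℂeᵢ` pairwise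
distinct, and the `fᵢ` linearly independent. -/
def Vset (m n k : ℕ) : Set (Matrix (Fin m × Fin n) (Fin m × Fin n) ℂ) :=
  {ω | ∃ (lam : Fin k → ℝ) (e : Fin k → EuclideanSpace ℂ (Fin m))
        (f : Fin k → EuclideanSpace ℂ (Fin n)),
      (∀ i, 0 < lam i) ∧ (∑ i, lam i) = 1 ∧ (∀ i, ‖e i‖ = 1) ∧ (∀ i, ‖f i‖ = 1) ∧
      (∀ i j : Fin k, i ≠ j → Submodule.span ℂ {e i} ≠ Submodule.span ℂ {e j}) ∧
      LinearIndependent ℂ f ∧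
      ω = ∑ i, lam i • vecState (tensorVec (e i) (f i))}

/-!
Write `vᵢ = eᵢ ⊗ fᵢ`; these are linearly independent because the `fᵢ` are. If
`ω = ∑ μⱼ ω_{zⱼ}` with arbitrary real weights, then every `w` orthogonal to all `zⱼ` satisfies
`∑ λᵢ |⟪vᵢ, w⟫|² = ⟪w, ω w⟫ = 0`, so `span {vᵢ} ≤ span {zⱼ}`, and comparing dimensions gives
`k ≤ r`. For a decomposition `ω = ∑ μⱼ ω_{xⱼ ⊗ yⱼ}` with positive weights the same argument
puts each `xⱼ ⊗ yⱼ` in `span {vᵢ}`; slicing along the first factor and using the independence of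
the `fᵢ` shows that every `eᵢ` occurring with a nonzero coefficient is parallel to `xⱼ`, so, the
lines `ℂ eᵢ` being distinct, `xⱼ ⊗ yⱼ` is a multiple of a single `vᵢ`. The resulting map `j ↦ i`
is injective, hence bijective as `r ≥ k`, and the weights match because the projections `ω_{vᵢ}`
are linearly independent.
-/

open scoped InnerProductSpace Matrix

section VecState

variable {ι : Type*} [Fintype ι]

lemma vecState_eq_vecMulVec (z : EuclideanSpace ℂ ι) :
    vecState z = Matrix.vecMulVec z.ofLp (star z.ofLp) := rfl

lemma vecState_mulVec (z w : EuclideanSpace ℂ ι) :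
    vecState z *ᵥ w.ofLp = ⟪z, w⟫_ℂ • z.ofLp := by
  rw [vecState_eq_vecMulVec, Matrix.vecMulVec_mulVec, op_smul_eq_smul,
    EuclideanSpace.inner_eq_star_dotProduct, dotProduct_comm]

lemma vecState_smul (c : ℂ) (z : EuclideanSpace ℂ ι) :
    vecState (c • z) = ((‖c‖ ^ 2 : ℝ) : ℂ) • vecState z := by
  ext i j
  simp only [vecState, Matrix.of_apply, Matrix.smul_apply, PiLp.smul_apply, smul_eq_mul, map_mul]
  rw [Complex.ofReal_pow, ← Complex.mul_conj']
  ring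

lemma vecState_smul_of_norm_eq_one {c : ℂ} (hc : ‖c‖ = 1) (z : EuclideanSpace ℂ ι) :
    vecState (c • z) = vecState z := by
  simp [vecState_smul, hc]

variable [DecidableEq ι] {α β : Type*} [Fintype α] [Fintype β]

lemma toEuclideanLin_vecState (z w : EuclideanSpace ℂ ι) :
    Matrix.toEuclideanLin (vecState z) w = ⟪z, w⟫_ℂ • z := by
  rw [Matrix.toLpLin_apply, vecState_mulVec]; rfl

lemma inner_toEuclideanLin_sum_smul_vecState (c : α → ℝ) (v : α → EuclideanSpace ℂ ι)
    (w : EuclideanSpace ℂ ι) :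
    ⟪w, Matrix.toEuclideanLin (∑ a, c a • vecState (v a)) w⟫_ℂ
      = ((∑ a, c a * ‖⟪v a, w⟫_ℂ‖ ^ 2 : ℝ) : ℂ) := by
  simp only [← Complex.coe_smul, map_sum, map_smul, LinearMap.sum_apply,
    LinearMap.smul_apply, toEuclideanLin_vecState, inner_sum, inner_smul_right]
  push_cast
  refine Finset.sum_congr rfl fun a _ => ?_
  rw [← inner_conj_symm w, ← Complex.mul_conj']

lemma span_range_le_of_sum_smul_vecState_eq {c : α → ℝ} {v : α → EuclideanSpace ℂ ι}
    {d : β → ℝ} {z : β → EuclideanSpace ℂ ι} (hc : ∀ a, 0 < c a)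
    (h : ∑ a, c a • vecState (v a) = ∑ b, d b • vecState (z b)) :
    Submodule.span ℂ (Set.range v) ≤ Submodule.span ℂ (Set.range z) := by
  set K := Submodule.span ℂ (Set.range z)
  rw [← K.orthogonal_orthogonal, Submodule.span_le]
  rintro _ ⟨a, rfl⟩
  refine (Kᗮ.mem_orthogonal _).2 fun w hw => ?_
  have hzw : ∀ b, ⟪z b, w⟫_ℂ = 0 := fun b =>
    Submodule.inner_right_of_mem_orthogonal (Submodule.subset_span (Set.mem_range_self b)) hw
  have hquad : ∑ a, c a * ‖⟪v a, w⟫_ℂ‖ ^ 2 = 0 := by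
    have := inner_toEuclideanLin_sum_smul_vecState d z w
    rw [← h, inner_toEuclideanLin_sum_smul_vecState] at this
    simpa [hzw] using Complex.ofReal_injective this
  have hva := (Finset.sum_eq_zero_iff_of_nonneg fun a _ =>
    mul_nonneg (hc a).le (sq_nonneg _)).1 hquad a (Finset.mem_univ a)
  rw [← inner_conj_symm, norm_eq_zero.1 (pow_eq_zero_iff two_ne_zero |>.1
    ((mul_eq_zero.1 hva).resolve_left (hc a).ne')), map_zero]

lemma linearIndependent_vecState {v : α → EuclideanSpace ℂ ι} (hv : LinearIndependent ℂ v) :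
    LinearIndependent ℂ fun a => vecState (v a) := by
  refine Fintype.linearIndependent_iff.2 fun g hg a => ?_
  have hcoef : ∀ w, ∀ b, g b * ⟪v b, w⟫_ℂ = 0 := fun w =>
    Fintype.linearIndependent_iff.1 hv _ <| by
      simpa [map_sum, toEuclideanLin_vecState, smul_smul] using
        congrArg (fun M => Matrix.toEuclideanLin M w) hg
  exact (mul_eq_zero.1 (hcoef (v a) a)).resolve_right (inner_self_ne_zero.2 (hv.ne_zero a))

lemma card_le_card_of_sum_smul_vecState_eq {c : α → ℝ} {v : α → EuclideanSpace ℂ ι}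
    {d : β → ℝ} {z : β → EuclideanSpace ℂ ι} (hc : ∀ a, 0 < c a) (hv : LinearIndependent ℂ v)
    (h : ∑ a, c a • vecState (v a) = ∑ b, d b • vecState (z b)) :
    Fintype.card α ≤ Fintype.card β :=
  calc Fintype.card α = Module.finrank ℂ (Submodule.span ℂ (Set.range v)) :=
        (finrank_span_eq_card hv).symm
    _ ≤ Module.finrank ℂ (Submodule.span ℂ (Set.range z)) :=
        Submodule.finrank_mono (span_range_le_of_sum_smul_vecState_eq hc h)
    _ ≤ Fintype.card β := finrank_range_le_card z

end VecState

section Tensor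

variable {m n : ℕ}

def tensorSlice (p : Fin m) : EuclideanSpace ℂ (Fin m × Fin n) →ₗ[ℂ] EuclideanSpace ℂ (Fin n) where
  toFun u := WithLp.toLp 2 fun b => u (p, b)
  map_add' _ _ := rfl
  map_smul' _ _ := rfl

lemma tensorSlice_tensorVec (p : Fin m) (x : EuclideanSpace ℂ (Fin m))
    (y : EuclideanSpace ℂ (Fin n)) : tensorSlice p (tensorVec x y) = x p • y := rfl

lemma norm_tensorVec (x : EuclideanSpace ℂ (Fin m)) (y : EuclideanSpace ℂ (Fin n)) :
    ‖tensorVec x y‖ = ‖x‖ * ‖y‖ := by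
  rw [EuclideanSpace.norm_eq, EuclideanSpace.norm_eq, EuclideanSpace.norm_eq,
    ← Real.sqrt_mul (by positivity), Finset.sum_mul_sum, Fintype.sum_prod_type]
  simp [tensorVec, mul_pow]

variable {α : Type*} [Fintype α] {e : α → EuclideanSpace ℂ (Fin m)}
  {f : α → EuclideanSpace ℂ (Fin n)}

lemma linearIndependent_tensorVec (he : ∀ a, e a ≠ 0) (hf : LinearIndependent ℂ f) :
    LinearIndependent ℂ fun a => tensorVec (e a) (f a) := by
  refine Fintype.linearIndependent_iff.2 fun g hg a => ?_
  have hslice : ∀ p b, g b * e b p = 0 := fun p =>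
    Fintype.linearIndependent_iff.1 hf _ <| by
      simpa [map_sum, tensorSlice_tensorVec, smul_smul] using congrArg (tensorSlice p) hg
  obtain ⟨p, hp⟩ : ∃ p, e a p ≠ 0 := by
    by_contra! h
    exact he a (PiLp.ext h)
  exact (mul_eq_zero.1 (hslice p a)).resolve_right hp

lemma smul_mem_span_singleton_of_tensorVec_eq_sum (hf : LinearIndependent ℂ f)
    {x : EuclideanSpace ℂ (Fin m)} (hx : x ≠ 0) {y : EuclideanSpace ℂ (Fin n)} {c : α → ℂ}
    (h : tensorVec x y = ∑ a, c a • tensorVec (e a) (f a)) (a : α) :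
    c a • e a ∈ Submodule.span ℂ {x} := by
  have hslice : ∀ p, x p • y = ∑ b, (c b * e b p) • f b := fun p => by
    simpa [map_sum, tensorSlice_tensorVec, smul_smul] using congrArg (tensorSlice p) h
  obtain ⟨p₀, hp₀⟩ : ∃ p, x p ≠ 0 := by
    by_contra! h
    exact hx (PiLp.ext h)
  have hcoord : ∀ p, x p₀ * (c a * e a p) = x p * (c a * e a p₀) := fun p =>
    Fintype.linearIndependent_iffₛ.1 hf _ _ (by
      calc ∑ b, (x p₀ * (c b * e b p)) • f b = x p₀ • x p • y := by
            simp [hslice p, Finset.smul_sum, smul_smul]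
        _ = x p • x p₀ • y := smul_comm _ _ _
        _ = ∑ b, (x p * (c b * e b p₀)) • f b := by
            simp [hslice p₀, Finset.smul_sum, smul_smul]) a
  refine Submodule.mem_span_singleton.2 ⟨c a * e a p₀ / x p₀, PiLp.ext fun p => ?_⟩
  simp only [PiLp.smul_apply, smul_eq_mul]
  field_simp
  linear_combination (hcoord p).symm

lemma exists_vecState_tensorVec_eq_of_mem_span (he : ∀ a, ‖e a‖ = 1) (hf₁ : ∀ a, ‖f a‖ = 1)
    (hf : LinearIndependent ℂ f)
    (hlines : Pairwise fun a b => Submodule.span ℂ {e a} ≠ Submodule.span ℂ {e b})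
    {x : EuclideanSpace ℂ (Fin m)} {y : EuclideanSpace ℂ (Fin n)} (hx : ‖x‖ = 1) (hy : ‖y‖ = 1)
    (hmem : tensorVec x y ∈ Submodule.span ℂ (Set.range fun a => tensorVec (e a) (f a))) :
    ∃ a, vecState (tensorVec x y) = vecState (tensorVec (e a) (f a)) := by
  obtain ⟨c, hc⟩ := (Submodule.mem_span_range_iff_exists_fun ℂ).1 hmem
  have hx₀ : x ≠ 0 := ne_zero_of_norm_ne_zero (by simp [hx])
  have hspan : ∀ a, c a ≠ 0 → Submodule.span ℂ {e a} = Submodule.span ℂ {x} := fun a ha => by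
    obtain ⟨t, ht⟩ := Submodule.mem_span_singleton.1
      (smul_mem_span_singleton_of_tensorVec_eq_sum hf hx₀ hc.symm a)
    have ht₀ : t ≠ 0 := by
      rintro rfl
      exact ha (by simpa [norm_smul, he a] using (congrArg norm ht).symm)
    rw [← Submodule.span_singleton_smul_eq ha.isUnit, ← ht,
      Submodule.span_singleton_smul_eq ht₀.isUnit]
  obtain ⟨a₀, ha₀⟩ : ∃ a, c a ≠ 0 := by
    by_contra! h
    simpa [h, norm_tensorVec, hx, hy] using congrArg norm hc
  have hxy : tensorVec x y = c a₀ • tensorVec (e a₀) (f a₀) := by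
    rw [← hc, Finset.sum_eq_single a₀ (fun a _ ha => ?_) (by simp)]
    by_contra hca
    exact hlines ha ((hspan a (left_ne_zero_of_smul hca)).trans (hspan a₀ ha₀).symm)
  have hc₀ : ‖c a₀‖ = 1 := by
    simpa [norm_smul, norm_tensorVec, hx, hy, he, hf₁] using (congrArg norm hxy).symm
  exact ⟨a₀, by rw [hxy, vecState_smul_of_norm_eq_one hc₀]⟩

end Tensor

section Vset

variable {m n k : ℕ} {lam : Fin k → ℝ} {e : Fin k → EuclideanSpace ℂ (Fin m)}
  {f : Fin k → EuclideanSpace ℂ (Fin n)}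

lemma exists_equiv_of_sum_smul_vecState_eq (hlam : ∀ i, 0 < lam i) (he : ∀ i, ‖e i‖ = 1)
    (hf₁ : ∀ i, ‖f i‖ = 1) (hf : LinearIndependent ℂ f)
    (hlines : Pairwise fun i j => Submodule.span ℂ {e i} ≠ Submodule.span ℂ {e j})
    {r : ℕ} {mu : Fin r → ℝ} {x : Fin r → EuclideanSpace ℂ (Fin m)}
    {y : Fin r → EuclideanSpace ℂ (Fin n)} (hmu : ∀ j, 0 < mu j) (hx : ∀ j, ‖x j‖ = 1)
    (hy : ∀ j, ‖y j‖ = 1)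
    (hdist : Pairwise fun j l =>
      vecState (tensorVec (x j) (y j)) ≠ vecState (tensorVec (x l) (y l)))
    (h : ∑ j, mu j • vecState (tensorVec (x j) (y j)) =
      ∑ i, lam i • vecState (tensorVec (e i) (f i))) :
    ∃ σ : Fin r ≃ Fin k, ∀ j, mu j = lam (σ j) ∧
      vecState (tensorVec (x j) (y j)) = vecState (tensorVec (e (σ j)) (f (σ j))) := by
  have hv : LinearIndependent ℂ fun i => tensorVec (e i) (f i) :=
    linearIndependent_tensorVec (fun i => ne_zero_of_norm_ne_zero (by simp [he i])) hf
  choose σ hσ using fun j =>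
    exists_vecState_tensorVec_eq_of_mem_span he hf₁ hf hlines (hx j) (hy j)
      (span_range_le_of_sum_smul_vecState_eq hmu h (Submodule.subset_span (Set.mem_range_self j)))
  have hσinj : Function.Injective σ := fun j l hjl => by
    by_contra hjl'
    exact hdist hjl' ((hσ j).trans (hjl ▸ (hσ l).symm))
  have hkr : k ≤ r := by
    simpa using card_le_card_of_sum_smul_vecState_eq hlam hv h.symm
  have hrk : r ≤ k := by simpa using Fintype.card_le_of_injective σ hσinj
  let σ' : Fin r ≃ Fin k := Equiv.ofBijective σ
    ((Fintype.bijective_iff_injective_and_card σ).2 ⟨hσinj, by simp [hrk.antisymm hkr]⟩)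
  have hweights : ∀ i, mu (σ'.symm i) = lam i := by
    refine Fintype.linearIndependent_iffₛ.1
      ((linearIndependent_vecState hv).restrict_scalars' ℝ) _ _ ?_
    rw [← h, ← σ'.symm.sum_comp]
    refine Finset.sum_congr rfl fun j _ => ?_
    rw [hσ, Equiv.ofBijective_apply_symm_apply σ]
  exact ⟨σ', fun j => ⟨by simpa using hweights (σ' j), hσ j⟩⟩

lemma hasLength_sum_smul_vecState (hlam : ∀ i, 0 < lam i) (hsum : ∑ i, lam i = 1)
    (he : ∀ i, ‖e i‖ = 1) (hf₁ : ∀ i, ‖f i‖ = 1) (hf : LinearIndependent ℂ f) :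
    HasLength m n k (∑ i, lam i • vecState (tensorVec (e i) (f i))) := by
  have hv : LinearIndependent ℂ fun i => tensorVec (e i) (f i) :=
    linearIndependent_tensorVec (fun i => ne_zero_of_norm_ne_zero (by simp [he i])) hf
  refine ⟨⟨lam, e, f, fun i => (hlam i).le, hsum, he, hf₁, rfl⟩,
    fun r hr ⟨_, _, _, _, _, _, _, h⟩ => hr.not_ge ?_⟩
  simpa using card_le_card_of_sum_smul_vecState_eq hlam hv h

end Vset

theorem Vset_length_and_unique_decomposition_general {m n k : ℕ}
    (ω : Matrix (Fin m × Fin n) (Fin m × Fin n) ℂ) (hω : ω ∈ Vset m n k) :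
    HasLength m n k ω ∧
    (∀ (r s : ℕ) (mu : Fin r → ℝ) (nu : Fin s → ℝ)
      (x : Fin r → EuclideanSpace ℂ (Fin m)) (y : Fin r → EuclideanSpace ℂ (Fin n))
      (u : Fin s → EuclideanSpace ℂ (Fin m)) (v : Fin s → EuclideanSpace ℂ (Fin n)),
      (∀ j, 0 < mu j) → (∑ j, mu j) = 1 → (∀ j, ‖x j‖ = 1) → (∀ j, ‖y j‖ = 1) →
      (∀ j l : Fin r, j ≠ l →
        vecState (tensorVec (x j) (y j)) ≠ vecState (tensorVec (x l) (y l))) →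
      (∀ j, 0 < nu j) → (∑ j, nu j) = 1 → (∀ j, ‖u j‖ = 1) → (∀ j, ‖v j‖ = 1) →
      (∀ j l : Fin s, j ≠ l →
        vecState (tensorVec (u j) (v j)) ≠ vecState (tensorVec (u l) (v l))) →
      ω = ∑ j, mu j • vecState (tensorVec (x j) (y j)) →
      ω = ∑ j, nu j • vecState (tensorVec (u j) (v j)) →
      ∃ σ : Fin r ≃ Fin s, ∀ j, mu j = nu (σ j) ∧
        vecState (tensorVec (x j) (y j)) =
          vecState (tensorVec (u (σ j)) (v (σ j)))) := by
  obtain ⟨lam, e, f, hlam, hsum, he, hf₁, hlines, hf, rfl⟩ := hω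
  refine ⟨hasLength_sum_smul_vecState hlam hsum he hf₁ hf, ?_⟩
  intro r s mu nu x y u v hmu _ hx hy hxy hnu _ hu hv huv h₁ h₂
  obtain ⟨σ, hσ⟩ := exists_equiv_of_sum_smul_vecState_eq hlam he hf₁ hf (fun i j => hlines i j)
    hmu hx hy (fun j l => hxy j l) h₁.symm
  obtain ⟨τ, hτ⟩ := exists_equiv_of_sum_smul_vecState_eq hlam he hf₁ hf (fun i j => hlines i j)
    hnu hu hv (fun j l => huv j l) h₂.symm
  refine ⟨σ.trans τ.symm, fun j => ?_⟩
  obtain ⟨hw, hst⟩ := hτ (τ.symm (σ j))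
  rw [τ.apply_symm_apply] at hw hst
  exact ⟨(hσ j).1.trans hw.symm, (hσ j).2.trans hst.symm⟩

/-- For `m, n > 1` and `k ≤ max(m,n)`, every state in `V_k` has length exactly `k` and
has a unique representation as a convex combination of pure product states. -/
theorem Vset_length_and_unique_decomposition {m n k : ℕ}
    (hm : 1 < m) (hn : 1 < n) (hk : k ≤ max m n)
    (ω : Matrix (Fin m × Fin n) (Fin m × Fin n) ℂ) (hω : ω ∈ Vset m n k) :
    HasLength m n k ω ∧
    (∀ (r s : ℕ) (mu : Fin r → ℝ) (nu : Fin s → ℝ)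
      (x : Fin r → EuclideanSpace ℂ (Fin m)) (y : Fin r → EuclideanSpace ℂ (Fin n))
      (u : Fin s → EuclideanSpace ℂ (Fin m)) (v : Fin s → EuclideanSpace ℂ (Fin n)),
      (∀ j, 0 < mu j) → (∑ j, mu j) = 1 → (∀ j, ‖x j‖ = 1) → (∀ j, ‖y j‖ = 1) →
      (∀ j l : Fin r, j ≠ l →
        vecState (tensorVec (x j) (y j)) ≠ vecState (tensorVec (x l) (y l))) →
      (∀ j, 0 < nu j) → (∑ j, nu j) = 1 → (∀ j, ‖u j‖ = 1) → (∀ j, ‖v j‖ = 1) →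
      (∀ j l : Fin s, j ≠ l →
        vecState (tensorVec (u j) (v j)) ≠ vecState (tensorVec (u l) (v l))) →
      ω = ∑ j, mu j • vecState (tensorVec (x j) (y j)) →
      ω = ∑ j, nu j • vecState (tensorVec (u j) (v j)) →
      ∃ σ : Fin r ≃ Fin s, ∀ j, mu j = nu (σ j) ∧
        vecState (tensorVec (x j) (y j)) =
          vecState (tensorVec (u (σ j)) (v (σ j)))) :=
  Vset_length_and_unique_decomposition_general ω hω

end
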